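/- arXiv:0904.2400 — 6 statements merged into one kernel-verified Lean document; each statement's English description precedes it below -/
import Mathlib

section
/- For every n ≥ 2 and every q ≥ 2n there exists a set V of vectors in the nonnegative orthant of ℝⁿ, each of Euclidean norm 1/√n, such that v·w ≤ 1/n − 1/q for all distinct v, w ∈ V, and |V| ≥ c·q^{(n−1)/2} for some constant c > 0 depending only on n. -/
/-!
Take the grid of spacing `δ = √(2n/q)` in the cube `[0, 1/√n]^{n-1}`, which lies in the unit
ball of `ℝ^{n-1}`; lift each grid point `x` to the unit vector `(x, √(1 - ‖x‖²))` and scale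
by `1/√n`. Lifting does not shrink distances, and for vectors of norm `ρ` one has
`⟪v, w⟫ = ρ² - ‖v - w‖²/2`; so distinct points have inner product at most
`(1/n)(1 - δ²/2) = 1/n - 1/q`. The grid has at least `(1/(√n δ))^{n-1} ≍ q^{(n-1)/2}` points.
-/

open Finset Real
open scoped InnerProductSpace

section

variable {m K : ℕ}

noncomputable def hemisphereLift (x : EuclideanSpace ℝ (Fin m)) : EuclideanSpace ℝ (Fin (m + 1)) :=
  WithLp.toLp 2 (Fin.snoc (α := fun _ => ℝ) x.ofLp √(1 - ‖x‖ ^ 2))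

@[simp] lemma hemisphereLift_castSucc (x : EuclideanSpace ℝ (Fin m)) (j : Fin m) :
    hemisphereLift x j.castSucc = x j := by
  simp [hemisphereLift]

@[simp] lemma hemisphereLift_last (x : EuclideanSpace ℝ (Fin m)) :
    hemisphereLift x (Fin.last m) = √(1 - ‖x‖ ^ 2) := by
  simp [hemisphereLift]

lemma hemisphereLift_injective : Function.Injective (hemisphereLift (m := m)) := by
  intro x y h
  ext j
  simpa using congr($h j.castSucc)

lemma hemisphereLift_nonneg {x : EuclideanSpace ℝ (Fin m)} (hx : ∀ j, 0 ≤ x j) (i : Fin (m + 1)) :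
    0 ≤ hemisphereLift x i := by
  induction i using Fin.lastCases with
  | last => simp
  | cast j => simpa using hx j

lemma norm_hemisphereLift {x : EuclideanSpace ℝ (Fin m)} (hx : ‖x‖ ≤ 1) :
    ‖hemisphereLift x‖ = 1 := by
  have h : ‖hemisphereLift x‖ ^ 2 = 1 := by
    rw [EuclideanSpace.real_norm_sq_eq, Fin.sum_univ_castSucc]
    simp only [hemisphereLift_castSucc, hemisphereLift_last, ← EuclideanSpace.real_norm_sq_eq]
    rw [sq_sqrt (by nlinarith [norm_nonneg x])]
    ring
  exact (pow_eq_one_iff_of_nonneg (norm_nonneg _) two_ne_zero).1 h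

lemma norm_sq_hemisphereLift_sub (x y : EuclideanSpace ℝ (Fin m)) :
    ‖hemisphereLift x - hemisphereLift y‖ ^ 2 =
      ‖x - y‖ ^ 2 + (√(1 - ‖x‖ ^ 2) - √(1 - ‖y‖ ^ 2)) ^ 2 := by
  simp only [EuclideanSpace.real_norm_sq_eq, Fin.sum_univ_castSucc, PiLp.sub_apply,
    hemisphereLift_castSucc, hemisphereLift_last]

lemma real_inner_hemisphereLift_le {x y : EuclideanSpace ℝ (Fin m)} (hx : ‖x‖ ≤ 1)
    (hy : ‖y‖ ≤ 1) : ⟪hemisphereLift x, hemisphereLift y⟫_ℝ ≤ 1 - ‖x - y‖ ^ 2 / 2 := by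
  have h := norm_sub_sq_real (hemisphereLift x) (hemisphereLift y)
  rw [norm_sq_hemisphereLift_sub, norm_hemisphereLift hx, norm_hemisphereLift hy] at h
  nlinarith [sq_nonneg (√(1 - ‖x‖ ^ 2) - √(1 - ‖y‖ ^ 2))]

noncomputable def cubeGrid (m K : ℕ) (δ : ℝ) : Finset (EuclideanSpace ℝ (Fin m)) :=
  univ.image fun k : Fin m → Fin (K + 1) => WithLp.toLp 2 fun j => δ * (k j : ℕ)

lemma card_cubeGrid {δ : ℝ} (hδ : δ ≠ 0) : #(cubeGrid m K δ) = (K + 1) ^ m := by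
  rw [cubeGrid, card_image_of_injective, card_univ, Fintype.card_fun, Fintype.card_fin,
    Fintype.card_fin]
  intro k k' h
  funext j
  have := congr($h j)
  simp only [mul_right_inj' hδ, Nat.cast_inj] at this
  exact Fin.ext this

lemma mem_cubeGrid_apply_mem_Icc {δ : ℝ} (hδ : 0 ≤ δ) {x : EuclideanSpace ℝ (Fin m)}
    (hx : x ∈ cubeGrid m K δ) (j : Fin m) : x j ∈ Set.Icc 0 (K * δ) := by
  obtain ⟨k, -, rfl⟩ := mem_image.1 hx
  have hk : ((k j : ℕ) : ℝ) ≤ K := by exact_mod_cast Nat.le_of_lt_succ (k j).isLt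
  exact ⟨by positivity, by nlinarith⟩

lemma norm_sq_le_of_mem_cubeGrid {δ : ℝ} (hδ : 0 ≤ δ) {x : EuclideanSpace ℝ (Fin m)}
    (hx : x ∈ cubeGrid m K δ) : ‖x‖ ^ 2 ≤ m * (K * δ) ^ 2 := by
  rw [EuclideanSpace.real_norm_sq_eq]
  calc ∑ j, x j ^ 2 ≤ ∑ _j : Fin m, (K * δ) ^ 2 := by
        gcongr with j
        · exact (mem_cubeGrid_apply_mem_Icc hδ hx j).1
        · exact (mem_cubeGrid_apply_mem_Icc hδ hx j).2
    _ = m * (K * δ) ^ 2 := by simp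

lemma le_norm_sub_of_mem_cubeGrid {δ : ℝ} (hδ : 0 ≤ δ) {x y : EuclideanSpace ℝ (Fin m)}
    (hx : x ∈ cubeGrid m K δ) (hy : y ∈ cubeGrid m K δ) (hxy : x ≠ y) : δ ≤ ‖x - y‖ := by
  obtain ⟨k, -, rfl⟩ := mem_image.1 hx
  obtain ⟨k', -, rfl⟩ := mem_image.1 hy
  obtain ⟨j, hj⟩ := Function.ne_iff.1 fun h : k = k' => hxy (by rw [h])
  have hgap : (1 : ℝ) ≤ |((k j : ℕ) : ℝ) - (k' j : ℕ)| := by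
    have : ((k j : ℕ) : ℤ) - (k' j : ℕ) ≠ 0 := sub_ne_zero.2 (by exact_mod_cast Fin.val_ne_of_ne hj)
    exact_mod_cast Int.one_le_abs this
  calc δ ≤ δ * |((k j : ℕ) : ℝ) - (k' j : ℕ)| := le_mul_of_one_le_right hδ hgap
    _ = ‖((WithLp.toLp 2 fun j => δ * (k j : ℕ)) - WithLp.toLp 2 fun j => δ * (k' j : ℕ) :
          EuclideanSpace ℝ (Fin m)) j‖ := by
        simp [← mul_sub, abs_of_nonneg hδ]
    _ ≤ _ := PiLp.norm_apply_le _ j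

end

lemma exists_orthant_sphere_packing (m : ℕ) {ρ δ t : ℝ} (hρ : 0 < ρ) (hδ : 0 < δ) (ht : 0 ≤ t)
    (hmt : m * t ^ 2 ≤ 1) :
    ∃ V : Finset (EuclideanSpace ℝ (Fin (m + 1))),
      (∀ v ∈ V, (∀ i, 0 ≤ v i) ∧ ‖v‖ = ρ) ∧
      (∀ v ∈ V, ∀ w ∈ V, v ≠ w → ⟪v, w⟫_ℝ ≤ ρ ^ 2 * (1 - δ ^ 2 / 2)) ∧
      (t / δ) ^ m ≤ #V := by
  set G := cubeGrid m ⌊t / δ⌋₊ δ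
  have hside : ⌊t / δ⌋₊ * δ ≤ t := (le_div_iff₀ hδ).1 (Nat.floor_le (by positivity))
  have hball : ∀ x ∈ G, ‖x‖ ≤ 1 := fun x hx => by
    refine (pow_le_one_iff_of_nonneg (norm_nonneg x) two_ne_zero).1 ?_
    calc ‖x‖ ^ 2 ≤ m * (⌊t / δ⌋₊ * δ) ^ 2 := norm_sq_le_of_mem_cubeGrid hδ.le hx
      _ ≤ m * t ^ 2 := by gcongr
      _ ≤ 1 := hmt
  have hinj : Function.Injective fun x : EuclideanSpace ℝ (Fin m) => ρ • hemisphereLift x :=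
    (smul_right_injective _ hρ.ne').comp hemisphereLift_injective
  refine ⟨G.image fun x => ρ • hemisphereLift x, ?_, ?_, ?_⟩
  · simp only [forall_mem_image]
    intro x hx
    refine ⟨fun i => ?_, ?_⟩
    · exact mul_nonneg hρ.le
        (hemisphereLift_nonneg (fun j => (mem_cubeGrid_apply_mem_Icc hδ.le hx j).1) i)
    · rw [norm_smul, norm_hemisphereLift (hball x hx), Real.norm_of_nonneg hρ.le, mul_one]
  · simp only [forall_mem_image]
    intro x hx y hy hxy
    have hsep := le_norm_sub_of_mem_cubeGrid hδ.le hx hy fun h => hxy (by rw [h])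
    rw [real_inner_smul_left, real_inner_smul_right, ← mul_assoc, ← sq]
    gcongr
    calc ⟪hemisphereLift x, hemisphereLift y⟫_ℝ ≤ 1 - ‖x - y‖ ^ 2 / 2 :=
          real_inner_hemisphereLift_le (hball x hx) (hball y hy)
      _ ≤ 1 - δ ^ 2 / 2 := by gcongr
  · rw [card_image_of_injective _ hinj, card_cubeGrid hδ.ne']
    push_cast
    exact pow_le_pow_left₀ (by positivity) (Nat.lt_floor_add_one _).le m

/-- packing of `Ω(q^{(n-1)/2})` vectors on the positive part of the
sphere of radius `1/√n` with pairwise inner products at most `1/n - 1/q`. -/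
theorem stmt_3 (n : ℕ) (hn : 2 ≤ n) :
    ∃ c : ℝ, 0 < c ∧ ∀ q : ℝ, 2 * n ≤ q →
      ∃ V : Finset (EuclideanSpace ℝ (Fin n)),
        (∀ v ∈ V, (∀ i, 0 ≤ v i) ∧ ‖v‖ = 1 / Real.sqrt n) ∧
        (∀ v ∈ V, ∀ w ∈ V, v ≠ w → (inner ℝ v w : ℝ) ≤ 1 / n - 1 / q) ∧
        c * q ^ (((n : ℝ) - 1) / 2) ≤ V.card := by
  obtain ⟨m, rfl⟩ : ∃ m, n = m + 1 := ⟨n - 1, by omega⟩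
  set N : ℝ := ((m + 1 : ℕ) : ℝ) with hN
  have hN0 : 0 < N := by positivity
  refine ⟨(√2 * N)⁻¹ ^ m, by positivity, fun q hq => ?_⟩
  have hq0 : 0 < q := lt_of_lt_of_le (by positivity) hq
  have hmt : m * (√N)⁻¹ ^ 2 ≤ 1 := by
    rw [inv_pow, sq_sqrt hN0.le, ← div_eq_mul_inv, div_le_one hN0]
    simp [hN]
  obtain ⟨V, hV, hVsep, hVcard⟩ := exists_orthant_sphere_packing m (ρ := 1 / √N)
    (δ := √(2 * N / q)) (by positivity) (by positivity) (by positivity) hmt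
  refine ⟨V, hV, fun v hv w hw hvw => (hVsep v hv w hw hvw).trans_eq ?_, le_trans ?_ hVcard⟩
  · rw [div_pow, sq_sqrt hN0.le, sq_sqrt (by positivity)]
    field_simp
  · have hexp : (N - 1) / 2 = 1 / 2 * (m : ℝ) := by rw [hN]; push_cast; ring
    rw [hexp, rpow_mul hq0.le, rpow_natCast, ← sqrt_eq_rpow .., ← mul_pow]
    refine le_of_eq (congrArg (· ^ m) ?_)
    rw [sqrt_div (by positivity), sqrt_mul zero_le_two]
    field_simp
    exact sq_sqrt hN0.le
end

section
/- Fix n ≥ 4 and q ≥ 2n, and let v_1, ..., v_ℓ be vectors in the nonnegative orthant of ℝⁿ with ‖v_j‖₂ = 1/√n for all j and v_i·v_j ≤ 1/n − 1/q for all i ≠ j. Define consumer valuations ṽ_j = 2^j · v_j and lotteries λ_j with probability vector v_j and price (1/q)·2^j. Then for every j, the utility of consumer ṽ_j from lottery λ_j equals (1/n − 1/q)·2^j, and her utility from any other lottery λ_i (i ≠ j) is at most (1/n − 1/q)·2^j minus its price, hence at most (1/n − 1/q)·2^j; in particular λ_j is a utility-maximizing choice for consumer ṽ_j. -/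
section

variable {E : Type*} [NormedAddCommGroup E] [InnerProductSpace ℝ E]

theorem real_inner_self_eq_one_div_of_norm_eq {x : E} {a : ℝ} (ha : 0 ≤ a)
    (hx : ‖x‖ = 1 / Real.sqrt a) : inner ℝ x x = 1 / a := by
  rw [real_inner_self_eq_norm_sq, hx, div_pow, one_pow, Real.sq_sqrt ha]

theorem real_inner_smul_left_le_of_inner_le {x y : E} {b c : ℝ} (hc : 0 ≤ c)
    (h : inner ℝ x y ≤ b) : inner ℝ (c • x) y ≤ b * c := by
  rw [real_inner_smul_left, mul_comm b]
  exact mul_le_mul_of_nonneg_left h hc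

end

theorem stmt_5_general (n : ℕ) (q : ℝ) (hq : 2 * n ≤ q)
    (ℓ : ℕ) (v : ℕ → EuclideanSpace ℝ (Fin n))
    (hnorm : ∀ j, 1 ≤ j → j ≤ ℓ → ‖v j‖ = 1 / Real.sqrt n)
    (hdot : ∀ i j, 1 ≤ i → i ≤ ℓ → 1 ≤ j → j ≤ ℓ → i ≠ j →
      (inner ℝ (v i) (v j) : ℝ) ≤ 1 / n - 1 / q)
    (j : ℕ) (hj1 : 1 ≤ j) (hjl : j ≤ ℓ) :
    (inner ℝ ((2 ^ j : ℝ) • v j) (v j) : ℝ) - (1 / q) * 2 ^ j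
        = (1 / n - 1 / q) * 2 ^ j ∧
    (∀ i, 1 ≤ i → i ≤ ℓ → i ≠ j →
      (inner ℝ ((2 ^ j : ℝ) • v j) (v i) : ℝ) - (1 / q) * 2 ^ i
        ≤ (1 / n - 1 / q) * 2 ^ j - (1 / q) * 2 ^ i) ∧
    (∀ i, 1 ≤ i → i ≤ ℓ →
      (inner ℝ ((2 ^ j : ℝ) • v j) (v i) : ℝ) - (1 / q) * 2 ^ i
        ≤ (inner ℝ ((2 ^ j : ℝ) • v j) (v j) : ℝ) - (1 / q) * 2 ^ j) := by
  have hown : (inner ℝ ((2 ^ j : ℝ) • v j) (v j) : ℝ) - (1 / q) * 2 ^ j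
      = (1 / n - 1 / q) * 2 ^ j := by
    rw [real_inner_smul_left,
      real_inner_self_eq_one_div_of_norm_eq (Nat.cast_nonneg n) (hnorm j hj1 hjl)]
    ring
  have hother : ∀ i, 1 ≤ i → i ≤ ℓ → i ≠ j →
      (inner ℝ ((2 ^ j : ℝ) • v j) (v i) : ℝ) - (1 / q) * 2 ^ i
        ≤ (1 / n - 1 / q) * 2 ^ j - (1 / q) * 2 ^ i := fun i hi1 hil hij =>
    sub_le_sub_right (real_inner_smul_left_le_of_inner_le (by positivity)
      (hdot j i hj1 hjl hi1 hil (Ne.symm hij))) _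
  refine ⟨hown, hother, fun i hi1 hil => ?_⟩
  rcases eq_or_ne i j with rfl | hij
  · exact le_rfl
  · have hprice : 0 ≤ (1 / q) * 2 ^ i :=
      mul_nonneg (one_div_nonneg.2 (le_trans (by positivity) hq)) (by positivity)
    linarith [hother i hi1 hil hij]

/-- in the buy-one lower bound construction, consumer `ṽ_j = 2^j v_j`
gets utility exactly `(1/n - 1/q)·2^j` from lottery `λ_j = (v_j, 2^j/q)`, utility
at most `(1/n - 1/q)·2^j` minus the price from any other lottery `λ_i`, and hence
`λ_j` is utility-maximizing for her. -/
theorem stmt_5 (n : ℕ) (hn : 4 ≤ n) (q : ℝ) (hq : 2 * n ≤ q)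
    (ℓ : ℕ) (v : ℕ → EuclideanSpace ℝ (Fin n))
    (hpos : ∀ j, 1 ≤ j → j ≤ ℓ → ∀ i, 0 ≤ v j i)
    (hnorm : ∀ j, 1 ≤ j → j ≤ ℓ → ‖v j‖ = 1 / Real.sqrt n)
    (hdot : ∀ i j, 1 ≤ i → i ≤ ℓ → 1 ≤ j → j ≤ ℓ → i ≠ j →
      (inner ℝ (v i) (v j) : ℝ) ≤ 1 / n - 1 / q)
    (j : ℕ) (hj1 : 1 ≤ j) (hjl : j ≤ ℓ) :
    (inner ℝ ((2 ^ j : ℝ) • v j) (v j) : ℝ) - (1 / q) * 2 ^ j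
        = (1 / n - 1 / q) * 2 ^ j ∧
    (∀ i, 1 ≤ i → i ≤ ℓ → i ≠ j →
      (inner ℝ ((2 ^ j : ℝ) • v j) (v i) : ℝ) - (1 / q) * 2 ^ i
        ≤ (1 / n - 1 / q) * 2 ^ j - (1 / q) * 2 ^ i) ∧
    (∀ i, 1 ≤ i → i ≤ ℓ →
      (inner ℝ ((2 ^ j : ℝ) • v j) (v i) : ℝ) - (1 / q) * 2 ^ i
        ≤ (inner ℝ ((2 ^ j : ℝ) • v j) (v j) : ℝ) - (1 / q) * 2 ^ j) :=
  stmt_5_general n q hq ℓ v hnorm hdot j hj1 hjl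
end

section
/- In the buy-one lottery construction with consumer types ṽ_j = 2^j·v_j occurring with probability μ_j = 2^{−j} for j = 1,...,ℓ, where ‖v_j‖₂ = 1/√n: for any single item priced at p ∈ ℝ₊ (with all other items priced at +∞), the item-pricing revenue is at most 2, and hence the revenue of any item pricing on n items is at most 2n. More precisely, if 2^{k−1} < p ≤ 2^k, every consumer ṽ_j with j < k has all item values less than p (since each coordinate of ṽ_j is at most 2^j·(1/√n) < 2^j), and the total probability of consumers j ≥ k is at most 2^{−k+1}, so revenue is at most p·2^{−k+1} ≤ 2. -/
open Finset

lemma geom_tail (k m : ℕ) : ∑ j ∈ Finset.Icc k m, (2 : ℝ)⁻¹ ^ j ≤ 2 * (2:ℝ)⁻¹ ^ k := by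
  rw [← Finset.Ico_add_one_right_eq_Icc, Finset.sum_Ico_eq_sum_range]
  have : ∀ i, (2:ℝ)⁻¹ ^ (k + i) = (2:ℝ)⁻¹ ^ k * (2:ℝ)⁻¹ ^ i := fun i => pow_add _ _ _
  simp_rw [this, ← Finset.mul_sum]
  rw [mul_comm]
  apply mul_le_mul_of_nonneg_right _ (by positivity)
  simpa [one_div] using sum_geometric_two_le (m + 1 - k)

lemma key (ℓ : ℕ) (p : ℝ) (hp : 0 < p) (b : ℕ → Prop) [DecidablePred b]
    (hb : ∀ j ∈ Finset.Icc 1 ℓ, b j → p ≤ 2 ^ j) :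
    ∑ j ∈ Finset.Icc 1 ℓ, (2 : ℝ)⁻¹ ^ j * (if b j then p else 0) ≤ 2 := by
  have hrw : ∑ j ∈ Finset.Icc 1 ℓ, (2 : ℝ)⁻¹ ^ j * (if b j then p else 0)
      = ∑ j ∈ (Finset.Icc 1 ℓ).filter b, (2 : ℝ)⁻¹ ^ j * p := by
    rw [Finset.sum_filter]
    exact Finset.sum_congr rfl fun j _ => by split <;> simp
  rw [hrw]
  set S := (Finset.Icc 1 ℓ).filter b with hS
  rcases S.eq_empty_or_nonempty with h | h
  · simp [h]
  · set k := S.min' h with hk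
    have hkS : k ∈ S := S.min'_mem h
    have hkIcc : k ∈ Finset.Icc 1 ℓ := Finset.mem_of_mem_filter _ hkS
    have hpk : p ≤ 2 ^ k := hb k hkIcc (Finset.mem_filter.mp hkS).2
    have hsub : S ⊆ Finset.Icc k ℓ := by
      intro j hj
      have h1 : j ∈ Finset.Icc 1 ℓ := Finset.mem_of_mem_filter _ hj
      exact Finset.mem_Icc.mpr ⟨S.min'_le j hj, (Finset.mem_Icc.mp h1).2⟩
    calc ∑ j ∈ S, (2 : ℝ)⁻¹ ^ j * p
        ≤ ∑ j ∈ Finset.Icc k ℓ, (2 : ℝ)⁻¹ ^ j * p :=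
          Finset.sum_le_sum_of_subset_of_nonneg hsub (fun j _ _ => by positivity)
      _ = (∑ j ∈ Finset.Icc k ℓ, (2 : ℝ)⁻¹ ^ j) * p := by rw [Finset.sum_mul]
      _ ≤ (2 * (2:ℝ)⁻¹ ^ k) * p := mul_le_mul_of_nonneg_right (geom_tail k ℓ) hp.le
      _ ≤ (2 * (2:ℝ)⁻¹ ^ k) * 2 ^ k := by
          apply mul_le_mul_of_nonneg_left hpk (by positivity)
      _ = 2 := by
          rw [mul_assoc, ← mul_pow]
          norm_num

/-- in the buy-one lower bound construction (consumer `j` has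
valuation `2^j • v j` with probability `2^{-j}`, coordinates of `v j` at most 1),
any single item priced at `p > 0` yields revenue at most 2, and any item pricing
on the `n` items yields revenue at most `2n`. -/
theorem stmt_6 (n : ℕ) (hn : 0 < n) (ℓ : ℕ) (v : ℕ → EuclideanSpace ℝ (Fin n))
    (hpos : ∀ j, 1 ≤ j → j ≤ ℓ → ∀ i, 0 ≤ v j i)
    (hnorm : ∀ j, 1 ≤ j → j ≤ ℓ → ‖v j‖ = 1 / Real.sqrt n) :
    (∀ i : Fin n, ∀ p : ℝ, 0 < p →
      ∑ j ∈ Finset.Icc 1 ℓ, (2 : ℝ)⁻¹ ^ j *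
          (if p ≤ 2 ^ j * v j i then p else 0) ≤ 2) ∧
    (∀ P : Fin n → ℝ, (∀ i, 0 < P i) → ∀ pay : ℕ → ℝ,
      (∀ j, 1 ≤ j → j ≤ ℓ →
        pay j = 0 ∨ ∃ i, pay j = P i ∧ P i ≤ 2 ^ j * v j i) →
      ∑ j ∈ Finset.Icc 1 ℓ, (2 : ℝ)⁻¹ ^ j * pay j ≤ 2 * n) := by
  -- coordinate bound
  have hcoord : ∀ j, 1 ≤ j → j ≤ ℓ → ∀ i, v j i ≤ 1 := by
    intro j h1 h2 i
    have hv : |v j i| ≤ ‖v j‖ := by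
      rw [EuclideanSpace.norm_eq]
      have : |v j i| = Real.sqrt (|v j i| ^ 2) := by
        rw [Real.sqrt_sq (abs_nonneg _)]
      rw [this]
      apply Real.sqrt_le_sqrt
      exact Finset.single_le_sum (f := fun i => ‖v j i‖ ^ 2)
        (fun i _ => by positivity) (Finset.mem_univ i)
    have hs : (1:ℝ) ≤ Real.sqrt n := by
      rw [show (1:ℝ) = Real.sqrt 1 from (Real.sqrt_one).symm]
      exact Real.sqrt_le_sqrt (by exact_mod_cast hn)
    calc v j i ≤ |v j i| := le_abs_self _
      _ ≤ ‖v j‖ := hv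
      _ = 1 / Real.sqrt n := hnorm j h1 h2
      _ ≤ 1 := by rw [div_le_one (by linarith)]; exact hs
  have part1 : ∀ i : Fin n, ∀ p : ℝ, 0 < p →
      ∑ j ∈ Finset.Icc 1 ℓ, (2 : ℝ)⁻¹ ^ j *
          (if p ≤ 2 ^ j * v j i then p else 0) ≤ 2 := by
    intro i p hp
    apply key ℓ p hp
    intro j hj hbj
    rw [Finset.mem_Icc] at hj
    calc p ≤ 2 ^ j * v j i := hbj
      _ ≤ 2 ^ j * 1 := by
          apply mul_le_mul_of_nonneg_left (hcoord j hj.1 hj.2 i) (by positivity)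
      _ = 2 ^ j := mul_one _
  refine ⟨part1, ?_⟩
  intro P hP pay hpay
  have hstep : ∀ j ∈ Finset.Icc 1 ℓ, (2 : ℝ)⁻¹ ^ j * pay j ≤
      ∑ i : Fin n, (2 : ℝ)⁻¹ ^ j * (if P i ≤ 2 ^ j * v j i then P i else 0) := by
    intro j hj
    rw [Finset.mem_Icc] at hj
    rcases hpay j hj.1 hj.2 with h0 | ⟨i, hpi, hle⟩
    · rw [h0, mul_zero]
      exact Finset.sum_nonneg fun i _ => mul_nonneg (by positivity) (by split <;> simp [(hP i).le])
    · rw [hpi]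
      have : (2 : ℝ)⁻¹ ^ j * P i =
          (2 : ℝ)⁻¹ ^ j * (if P i ≤ 2 ^ j * v j i then P i else 0) := by
        rw [if_pos hle]
      rw [this]
      exact Finset.single_le_sum
        (f := fun i => (2 : ℝ)⁻¹ ^ j * (if P i ≤ 2 ^ j * v j i then P i else 0))
        (fun i _ => mul_nonneg (by positivity) (by split <;> simp [(hP i).le])) (Finset.mem_univ i)
  calc ∑ j ∈ Finset.Icc 1 ℓ, (2 : ℝ)⁻¹ ^ j * pay j
      ≤ ∑ j ∈ Finset.Icc 1 ℓ, ∑ i : Fin n,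
          (2 : ℝ)⁻¹ ^ j * (if P i ≤ 2 ^ j * v j i then P i else 0) :=
        Finset.sum_le_sum hstep
    _ = ∑ i : Fin n, ∑ j ∈ Finset.Icc 1 ℓ,
          (2 : ℝ)⁻¹ ^ j * (if P i ≤ 2 ^ j * v j i then P i else 0) :=
        Finset.sum_comm
    _ ≤ ∑ _i : Fin n, (2:ℝ) := Finset.sum_le_sum fun i _ => part1 i (P i) (hP i)
    _ = 2 * n := by simp [mul_comm]
end

section
/- In the buy-many lower bound construction over items indexed by (ℤ/nℤ)² with consumer classes C_P (value v_P for items in S_P, value 0 elsewhere, |S_P| = n, |S_P ∩ S_Q| ≤ 2 for P ≠ Q, and all values satisfying v_Q ≥ v_P/n): offering for each P a lottery φ_P that assigns probability 1/n to each item of S_P at price v_P/2, a consumer of class C_P gets utility v_P/2 from buying φ_P, while any single lottery φ_Q with Q ≠ P yields her expected value at most (2/n)·v_P and hence utility at most (2/n)v_P − v_Q/2 ≤ (3/(2n))·v_P. -/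
/-- in the buy-many lower bound construction, a consumer of class
`C_P` (value `vP` on the graph `S_P`) gets utility exactly `vP/2` from the lottery
`φ_P` (probability `1/n` on each point of `S_P`, price `vP/2`), while any other
lottery `φ_Q` yields utility at most `(2/n)vP - vQ/2 ≤ (3/(2n))vP`. -/
theorem stmt_9 (n : ℕ) [Fact n.Prime] (P Q : Polynomial (ZMod n))
    (hP : P.degree ≤ 2) (hQ : Q.degree ≤ 2) (hPQ : P ≠ Q)
    (vP vQ : ℝ) (hvP : 0 < vP) (hvQ : 0 < vQ) (hval : vP / n ≤ vQ) :
    vP * ((Finset.image (fun x : ZMod n => (x, P.eval x)) Finset.univ).card : ℝ)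
        * (1 / n) - vP / 2 = vP / 2 ∧
    vP * ((((Finset.image (fun x : ZMod n => (x, P.eval x)) Finset.univ) ∩
          (Finset.image (fun x : ZMod n => (x, Q.eval x)) Finset.univ)).card : ℝ))
        * (1 / n) - vQ / 2 ≤ (2 / n) * vP - vQ / 2 ∧
    (2 / n) * vP - vQ / 2 ≤ (3 / (2 * n)) * vP := by
  have hn : 0 < n := (Fact.out : n.Prime).pos
  have hnR : (0 : ℝ) < n := by exact_mod_cast hn
  have hcard : (Finset.image (fun x : ZMod n => (x, P.eval x)) Finset.univ).card = n := by
    rw [Finset.card_image_of_injective _ (fun a b h => congrArg Prod.fst h),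
      Finset.card_univ, ZMod.card]
  refine ⟨?_, ?_, ?_⟩
  · rw [hcard]; field_simp; ring
  · have hsub : P - Q ≠ 0 := sub_ne_zero.mpr hPQ
    have hle2 : (((Finset.image (fun x : ZMod n => (x, P.eval x)) Finset.univ) ∩
          (Finset.image (fun x : ZMod n => (x, Q.eval x)) Finset.univ)).card) ≤ 2 := by
      have hmap : ∀ p ∈ ((Finset.image (fun x : ZMod n => (x, P.eval x)) Finset.univ) ∩
          (Finset.image (fun x : ZMod n => (x, Q.eval x)) Finset.univ)),
          p.1 ∈ (P - Q).roots.toFinset := by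
        intro p hp
        simp only [Finset.mem_inter, Finset.mem_image, Finset.mem_univ, true_and] at hp
        obtain ⟨⟨a, ha⟩, ⟨b, hb⟩⟩ := hp
        have ha1 : a = p.1 := congrArg Prod.fst ha
        have hb1 : b = p.1 := congrArg Prod.fst hb
        have hPv : P.eval p.1 = p.2 := by rw [← ha1]; exact congrArg Prod.snd ha
        have hQv : Q.eval p.1 = p.2 := by rw [← hb1]; exact congrArg Prod.snd hb
        simp [Polynomial.mem_roots, hsub, hPv, hQv]
      have hinj : Set.InjOn (fun p : ZMod n × ZMod n => p.1)
          ↑((Finset.image (fun x : ZMod n => (x, P.eval x)) Finset.univ) ∩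
          (Finset.image (fun x : ZMod n => (x, Q.eval x)) Finset.univ)) := by
        intro p hp q hq h
        simp only [Finset.coe_inter, Set.mem_inter_iff, Finset.coe_image,
          Set.mem_image, Finset.coe_univ, Set.image_univ, Set.mem_range] at hp hq
        obtain ⟨⟨a, ha⟩, -⟩ := hp
        obtain ⟨⟨b, hb⟩, -⟩ := hq
        have ha1 : a = p.1 := congrArg Prod.fst ha
        have hb1 : b = q.1 := congrArg Prod.fst hb
        have : P.eval p.1 = p.2 := by rw [← ha1]; exact congrArg Prod.snd ha
        have h2 : P.eval q.1 = q.2 := by rw [← hb1]; exact congrArg Prod.snd hb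
        have h' : p.1 = q.1 := h
        exact Prod.ext h' (by rw [← this, ← h2, h'])
      calc ((Finset.image (fun x : ZMod n => (x, P.eval x)) Finset.univ) ∩
          (Finset.image (fun x : ZMod n => (x, Q.eval x)) Finset.univ)).card
          ≤ (P - Q).roots.toFinset.card := Finset.card_le_card_of_injOn _ hmap hinj
        _ ≤ Multiset.card (P - Q).roots := (P - Q).roots.toFinset_card_le
        _ ≤ (P - Q).natDegree := (P - Q).card_roots' 
        _ ≤ 2 := by
            have := Polynomial.degree_sub_le P Q
            have hd : (P - Q).degree ≤ 2 := this.trans (max_le hP hQ)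
            exact Polynomial.natDegree_le_iff_degree_le.mpr hd
    have : (((Finset.image (fun x : ZMod n => (x, P.eval x)) Finset.univ) ∩
          (Finset.image (fun x : ZMod n => (x, Q.eval x)) Finset.univ)).card : ℝ) ≤ 2 := by
      exact_mod_cast hle2
    have h1 : vP * (((Finset.image (fun x : ZMod n => (x, P.eval x)) Finset.univ) ∩
          (Finset.image (fun x : ZMod n => (x, Q.eval x)) Finset.univ)).card : ℝ) * (1 / n)
          ≤ vP * 2 * (1 / n) := by
      apply mul_le_mul_of_nonneg_right (mul_le_mul_of_nonneg_left this hvP.le)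
      positivity
    have heq : vP * 2 * (1 / (n:ℝ)) = 2 / n * vP := by ring
    linarith [heq ▸ h1]
  · have h : vP / n ≤ vQ := hval
    rw [div_le_iff₀ hnR] at h
    rw [div_mul_eq_mul_div, div_mul_eq_mul_div, sub_le_iff_le_add]
    rw [div_add_div _ _ (ne_of_gt (by positivity : (0:ℝ) < 2*n)) (by norm_num : (2:ℝ) ≠ 0)]
    rw [div_le_div_iff₀ hnR (by positivity)]
    nlinarith
end

section
/- Consider the uniform-valuation buy-one construction: for k = 2ⁿ − 2 let S_0, ..., S_k be all nonempty subsets of {1,...,n} ordered by decreasing cardinality; consumer type c_j values each item in S_j at n^j (and others at 0); lottery λ_j assigns probability 1/|S_j| to each item of S_j at price n^{j−1}. Then for each j: (a) u(c_j, λ_j) = n^j − n^{j−1}; (b) for i < j, u(c_j, λ_i) ≤ (1 − 1/n)·n^j = n^j − n^{j−1}; (c) for i > j, the price n^{i−1} exceeds c_j's maximum possible value n^j from λ_i only when i > j+1 — in any case λ_j is a utility-maximizing affordable lottery for c_j. -/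
/-- uniform-valuation buy-one construction. `S 0, …, S k` enumerate
the nonempty subsets of the `n` items in order of decreasing cardinality
(`k = 2^n - 2`); consumer `c_j` values items of `S j` at `n^j`; lottery `λ_i` puts
probability `1/|S i|` on each item of `S i` and costs `n^{i-1}`. Then
(a) `u(c_j, λ_j) = n^j - n^{j-1}`; (b) for `i < j`, `u(c_j, λ_i) ≤ (1 - 1/n)·n^j`;
(c) `λ_j` is a utility-maximizing lottery for `c_j`. -/
theorem stmt_11 (n : ℕ) (hn : 2 ≤ n) (k : ℕ) (hk : k = 2 ^ n - 2)
    (S : ℕ → Finset (Fin n))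
    (hne : ∀ i ≤ k, (S i).Nonempty)
    (hinj : ∀ i ≤ k, ∀ j ≤ k, S i = S j → i = j)
    (hord : ∀ i j : ℕ, i ≤ j → j ≤ k → (S j).card ≤ (S i).card)
    (j : ℕ) (hj : j ≤ k) :
    ((n : ℝ) ^ j * (((S j ∩ S j).card : ℝ) / (S j).card) - (n : ℝ) ^ ((j : ℤ) - 1)
        = (n : ℝ) ^ j - (n : ℝ) ^ ((j : ℤ) - 1)) ∧
    (∀ i < j,
      (n : ℝ) ^ j * (((S j ∩ S i).card : ℝ) / (S i).card) - (n : ℝ) ^ ((i : ℤ) - 1)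
        ≤ (1 - 1 / n) * (n : ℝ) ^ j) ∧
    (∀ i ≤ k,
      (n : ℝ) ^ j * (((S j ∩ S i).card : ℝ) / (S i).card) - (n : ℝ) ^ ((i : ℤ) - 1)
        ≤ (n : ℝ) ^ j - (n : ℝ) ^ ((j : ℤ) - 1)) := by

  have hnR : (2:ℝ) ≤ n := by exact_mod_cast hn
  have hn0 : (0:ℝ) < n := lt_of_lt_of_le two_pos hnR
  have hn1 : (1:ℝ) ≤ n := by linarith
  have hnne : (n:ℝ) ≠ 0 := ne_of_gt hn0
  have hcardpos : ∀ i, i ≤ k → (0:ℝ) < ((S i).card : ℝ) := by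
    intro i hi
    exact_mod_cast (hne i hi).card_pos
  have hcardn : ∀ i, ((S i).card : ℝ) ≤ n := by
    intro i
    have h := Finset.card_le_card (Finset.subset_univ (S i))
    have : (S i).card ≤ n := by simpa using h
    exact_mod_cast this
  have hsub1 : (n:ℝ) ^ ((j:ℤ) - 1) = (n:ℝ) ^ j / n := by
    rw [zpow_sub₀ hnne, zpow_one, zpow_natCast]
  have hpowpos : ∀ m : ℤ, (0:ℝ) < (n:ℝ) ^ m := fun m => zpow_pos hn0 m
  have ha : (n : ℝ) ^ j * (((S j ∩ S j).card : ℝ) / (S j).card) - (n : ℝ) ^ ((j : ℤ) - 1)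
      = (n : ℝ) ^ j - (n : ℝ) ^ ((j : ℤ) - 1) := by
    rw [Finset.inter_self, div_self (ne_of_gt (hcardpos j hj))]
    ring
  have hblt : ∀ i < j, ((S j ∩ S i).card : ℝ) + 1 ≤ ((S i).card : ℝ) := by
    intro i hi
    have hik : i ≤ k := hi.le.trans hj
    have hlt : (S j ∩ S i).card < (S i).card := by
      refine Finset.card_lt_card (Finset.ssubset_iff_subset_ne.mpr ⟨Finset.inter_subset_right, ?_⟩)
      intro heq
      have hsubij : S i ⊆ S j := Finset.inter_eq_right.mp heq
      have hcle : (S j).card ≤ (S i).card := hord i j hi.le hj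
      have : S i = S j := Finset.eq_of_subset_of_card_le hsubij hcle
      exact Nat.ne_of_lt hi (hinj i hik j hj this)
    exact_mod_cast hlt
  have hb : ∀ i < j,
      (n : ℝ) ^ j * (((S j ∩ S i).card : ℝ) / (S i).card) - (n : ℝ) ^ ((i : ℤ) - 1)
        ≤ (1 - 1 / n) * (n : ℝ) ^ j := by
    intro i hi
    have hik : i ≤ k := hi.le.trans hj
    have hci : (0:ℝ) < ((S i).card : ℝ) := hcardpos i hik
    have hratio : ((S j ∩ S i).card : ℝ) / (S i).card ≤ 1 - 1 / n := by
      have h1 := hblt i hi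
      have h2 := hcardn i
      have heqq : (1:ℝ) - 1/n = (n - 1)/n := by field_simp
      rw [heqq, div_le_div_iff₀ hci hn0]
      nlinarith [mul_le_mul_of_nonneg_right h1 hn0.le]
    have hp : (0:ℝ) < (n:ℝ) ^ ((i:ℤ) - 1) := hpowpos _
    have hmul : (n : ℝ) ^ j * (((S j ∩ S i).card : ℝ) / (S i).card)
        ≤ (n : ℝ) ^ j * (1 - 1/n) :=
      mul_le_mul_of_nonneg_left hratio (pow_nonneg hn0.le j)
    nlinarith
  refine ⟨ha, hb, ?_⟩
  intro i hik
  have heq2 : (1 - 1/(n:ℝ)) * (n:ℝ) ^ j = (n:ℝ) ^ j - (n:ℝ) ^ ((j:ℤ) - 1) := by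
    rw [hsub1]; field_simp
  rcases lt_trichotomy i j with hlt | heq | hgt
  · calc _ ≤ (1 - 1/(n:ℝ)) * (n:ℝ) ^ j := hb i hlt
      _ = _ := heq2
  · subst heq; exact le_of_eq ha
  · have hci : (0:ℝ) < ((S i).card : ℝ) := hcardpos i hik
    have hratio : ((S j ∩ S i).card : ℝ) / (S i).card ≤ 1 := by
      rw [div_le_one hci]
      exact_mod_cast Finset.card_le_card (Finset.inter_subset_right)
    have hmul : (n : ℝ) ^ j * (((S j ∩ S i).card : ℝ) / (S i).card) ≤ (n:ℝ) ^ j := by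
      nlinarith [pow_pos hn0 j]
    have hpow : (n:ℝ) ^ ((j:ℤ)) ≤ (n:ℝ) ^ ((i:ℤ) - 1) := by
      apply zpow_le_zpow_right₀ hn1
      omega
    have hpj : (n:ℝ) ^ ((j:ℤ) - 1) ≤ (n:ℝ) ^ ((j:ℤ)) := by
      apply zpow_le_zpow_right₀ hn1
      omega
    have hnat : (n:ℝ) ^ ((j:ℤ)) = (n:ℝ) ^ j := zpow_natCast _ _
    linarith
end

section
/- For a single item and lottery probability φ = 1/(130n³): if a consumer with value v ≥ 0 would buy exactly k copies of a lottery with per-copy success probability φ at price p each (i.e., the k-th copy has nonnegative marginal utility and the (k+1)-th copy has nonpositive marginal utility), then φ(1 − φ)^k v ≤ p and φ(1 − φ)^{k−1} v ≥ p. Consequently (1 − φ)^k v ≤ p/φ = 130n³ p, and the consumer's utility from buying k copies, (1 − (1−φ)^k) v − k p, is at least max{v − (k + 130n³) p, 0}. -/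
lemma geom_aux (x : ℝ) (hx0 : 0 ≤ x) (hx1 : x ≤ 1) (k : ℕ) (hk : 1 ≤ k) :
    (k : ℝ) * (1 - x) * x ^ (k - 1) ≤ 1 - x ^ k := by
  have hsum : (1 - x) * (∑ i ∈ Finset.range k, x ^ i) = 1 - x ^ k := by
    have := geom_sum_mul x k
    nlinarith [this]
  have hS : (k : ℝ) * x ^ (k - 1) ≤ ∑ i ∈ Finset.range k, x ^ i := by
    have := Finset.card_nsmul_le_sum (Finset.range k) (fun i => x ^ i) (x ^ (k - 1))
      (fun i hi => pow_le_pow_of_le_one hx0 hx1 (by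
        have := Finset.mem_range.mp hi; omega))
    simpa [nsmul_eq_mul] using this
  have h1x : 0 ≤ 1 - x := by linarith
  nlinarith [mul_le_mul_of_nonneg_left hS h1x]

/-- buying `k` copies of a lottery with success probability
`φ = 1/(130n³)` at price `p` each: if the `k`-th copy has nonnegative marginal
utility and the `(k+1)`-th copy nonpositive marginal utility, then
`φ(1-φ)^k v ≤ p`, `φ(1-φ)^{k-1} v ≥ p`, hence `(1-φ)^k v ≤ 130n³ p`, and the
utility `(1-(1-φ)^k)v - kp` is at least `max{v - (k + 130n³)p, 0}`. -/
theorem stmt_13 (n : ℕ) (hn : 0 < n) (v p : ℝ) (hv : 0 ≤ v)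
    (k : ℕ) (hk : 1 ≤ k)
    (hstop : (1 / (130 * (n : ℝ) ^ 3)) * (1 - 1 / (130 * (n : ℝ) ^ 3)) ^ k * v - p ≤ 0)
    (hgo : 0 ≤ (1 / (130 * (n : ℝ) ^ 3)) * (1 - 1 / (130 * (n : ℝ) ^ 3)) ^ (k - 1) * v - p) :
    (1 / (130 * (n : ℝ) ^ 3)) * (1 - 1 / (130 * (n : ℝ) ^ 3)) ^ k * v ≤ p ∧
    p ≤ (1 / (130 * (n : ℝ) ^ 3)) * (1 - 1 / (130 * (n : ℝ) ^ 3)) ^ (k - 1) * v ∧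
    (1 - 1 / (130 * (n : ℝ) ^ 3)) ^ k * v ≤ 130 * (n : ℝ) ^ 3 * p ∧
    max (v - ((k : ℝ) + 130 * (n : ℝ) ^ 3) * p) 0 ≤
      (1 - (1 - 1 / (130 * (n : ℝ) ^ 3)) ^ k) * v - (k : ℝ) * p := by
  set N : ℝ := 130 * (n : ℝ) ^ 3 with hNdef
  have hn1 : (1 : ℝ) ≤ (n : ℝ) := by exact_mod_cast hn
  have hN : (130 : ℝ) ≤ N := by rw [hNdef]; nlinarith [pow_le_pow_left₀ (by norm_num : (0:ℝ) ≤ 1) hn1 3]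
  have hNpos : 0 < N := by linarith
  set φ : ℝ := 1 / N with hφdef
  have hφpos : 0 < φ := by positivity
  have hφ1 : φ ≤ 1 := by
    rw [hφdef]
    exact div_le_one_of_le₀ (by linarith) hNpos.le
  have hNφ : N * φ = 1 := by rw [hφdef]; field_simp
  set x : ℝ := 1 - φ with hxdef
  have hx0 : 0 ≤ x := by linarith
  have hx1 : x ≤ 1 := by linarith
  have c1 : φ * x ^ k * v ≤ p := by linarith
  have c2 : p ≤ φ * x ^ (k - 1) * v := by linarith
  have c3 : x ^ k * v ≤ N * p := by
    have h := mul_le_mul_of_nonneg_left c1 hNpos.le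
    have e : N * (φ * x ^ k * v) = x ^ k * v := by
      rw [show N * (φ * x ^ k * v) = (N * φ) * (x ^ k * v) by ring, hNφ, one_mul]
    linarith
  refine ⟨c1, c2, c3, ?_⟩
  have hgeom := geom_aux x hx0 hx1 k hk
  have hkp : (k : ℝ) * p ≤ (1 - x ^ k) * v := by
    have h1 : (k : ℝ) * p ≤ (k : ℝ) * (φ * x ^ (k - 1) * v) :=
      mul_le_mul_of_nonneg_left c2 (by positivity)
    have h2 : (k : ℝ) * (φ * x ^ (k - 1) * v) ≤ (1 - x ^ k) * v := by
      have : (k : ℝ) * (1 - x) * x ^ (k - 1) = (k : ℝ) * φ * x ^ (k - 1) := by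
        rw [hxdef]; ring
      nlinarith [mul_le_mul_of_nonneg_right hgeom hv]
    linarith
  apply max_le
  · nlinarith
  · linarith
end
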